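/- Let n ∈ ℕ and let λ ∈ ℂ, λ ≠ 0, satisfy (n² + iλ − λ²)J_n(λ) + λJ_n′(λ) = 0, where J_n is the Bessel function of the first kind of order n. Then the function u(r,θ) = J_n(λr)e^{inθ} on the closed unit disk is nonzero and satisfies −Δu = λ²u in the open unit disk and (−Δ_Γ + iλ)u + ∂_ν u = λ²u on the unit circle, where Δ_Γ = ∂²/∂θ² and ∂_ν = ∂/∂r. -/

import Mathlib

open Complex

noncomputable section

/-- Bessel function of the first kind of integer order `n`. -/
def besselJ (n : ℕ) (z : ℂ) : ℂ :=
  ∑' m : ℕ, ((-1 : ℂ)) ^ m / ((Nat.factorial m : ℂ) * (Nat.factorial (m + n) : ℂ))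
      * (z / 2) ^ (2 * m + n)

/-- The mode `u(r,θ) = J_n(λr)e^{inθ}` on the closed unit disk, in polar coordinates. -/
def diskMode (n : ℕ) (lam : ℂ) (r θ : ℝ) : ℂ :=
  besselJ n (lam * r) * Complex.exp (I * (n : ℂ) * θ)

/-!
Write `J_n(z) = (z/2)^n F_n(-(z/2)^2)` with the entire series
`F_n(w) = ∑ w^m / (m! (m+n)!)`. Termwise differentiation gives `F_n' = F_{n+1}`, and comparing
coefficients gives `F_n = w F_{n+2} + (n+1) F_{n+1}`. These become the classical recurrences
`J_n' = (n/z) J_n - J_{n+1}` and `z (J_n + J_{n+2}) = 2(n+1) J_{n+1}`, which combine into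
Bessel's equation `z² J_n'' + z J_n' + (z² - n²) J_n = 0`; in polar coordinates this is the
interior equation, and on the circle the boundary equation is the hypothesis on `λ`. Since
`F_n(0) = 1/n! ≠ 0`, the factor `F_n(-(λr/2)^2)` does not vanish for small `r > 0`, so neither
does `J_n(λr)`.
-/

open scoped Nat Topology

def besselF (n : ℕ) (w : ℂ) : ℂ :=
  ∑' m : ℕ, w ^ m / ((m ! : ℂ) * ((m + n)! : ℂ))

theorem norm_pow_div_factorial_mul_factorial_le {n m : ℕ} {w : ℂ} {R : ℝ}
    (hw : ‖w‖ ≤ R) :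
    ‖w ^ m / ((m ! : ℂ) * ((m + n)! : ℂ))‖ ≤ R ^ m / m ! := by
  rw [norm_div, norm_mul, norm_pow, Complex.norm_natCast, Complex.norm_natCast]
  have hm : (0 : ℝ) < m ! := by positivity
  have hmn : (1 : ℝ) ≤ (m + n)! := Nat.one_le_cast.2 (Nat.factorial_pos _)
  calc ‖w‖ ^ m / (m ! * (m + n)!) ≤ ‖w‖ ^ m / m ! :=
        div_le_div_of_nonneg_left (by positivity) hm (le_mul_of_one_le_right hm.le hmn)
    _ ≤ R ^ m / m ! := by gcongr

theorem summable_pow_div_factorial_mul_factorial (n : ℕ) (w : ℂ) :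
    Summable fun m : ℕ => w ^ m / ((m ! : ℂ) * ((m + n)! : ℂ)) :=
  .of_norm_bounded (Real.summable_pow_div_factorial ‖w‖)
    fun _ => norm_pow_div_factorial_mul_factorial_le le_rfl

theorem hasDerivAt_besselF (n : ℕ) (w : ℂ) : HasDerivAt (besselF n) (besselF (n + 1) w) w := by
  set U := Metric.ball (0 : ℂ) (‖w‖ + 1)
  have hw : w ∈ U := by simp [U]
  have hterm : ∀ m,
      DifferentiableOn ℂ (fun v : ℂ => v ^ m / ((m ! : ℂ) * ((m + n)! : ℂ))) U :=
    fun m => by fun_prop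
  have hle : ∀ m, ∀ v ∈ U,
      ‖v ^ m / ((m ! : ℂ) * ((m + n)! : ℂ))‖ ≤ (‖w‖ + 1) ^ m / m ! :=
    fun m v hv => norm_pow_div_factorial_mul_factorial_le (mem_ball_zero_iff.1 hv).le
  have hdiff := Complex.differentiableOn_tsum_of_summable_norm
    (Real.summable_pow_div_factorial _) hterm Metric.isOpen_ball hle
  have hsum := Complex.hasSum_deriv_of_summable_norm
    (Real.summable_pow_div_factorial _) hterm Metric.isOpen_ball hle hw
  refine ((hdiff w hw).differentiableAt (Metric.isOpen_ball.mem_nhds hw)).hasDerivAt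
    |>.congr_deriv ?_
  have hshift := (hasSum_nat_add_iff' 1).2 hsum
  have hterm' : ∀ k : ℕ,
      deriv (fun v : ℂ => v ^ (k + 1) / (((k + 1)! : ℂ) * ((k + 1 + n)! : ℂ))) w
        = w ^ k / ((k ! : ℂ) * ((k + (n + 1))! : ℂ)) := fun k => by
    rw [deriv_div_const, deriv_pow_field, Nat.factorial_succ,
      show k + 1 + n = k + (n + 1) by ring]
    push_cast
    field_simp
  simp only [hterm', Finset.range_one, Finset.sum_singleton, pow_zero, deriv_const', sub_zero]
    at hshift
  exact hshift.unique (summable_pow_div_factorial_mul_factorial _ _).hasSum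

theorem besselF_zero (n : ℕ) : besselF n 0 = (n ! : ℂ)⁻¹ := by
  rw [besselF, tsum_eq_single 0 fun m hm => by simp [hm]]
  simp

theorem besselF_eq_mul_add_mul (n : ℕ) (w : ℂ) :
    besselF n w = w * besselF (n + 2) w + (n + 1) * besselF (n + 1) w := by
  have hs (k : ℕ) := summable_pow_div_factorial_mul_factorial k w
  have hsub := ((hs n).sub ((hs (n + 1)).mul_left ((n : ℂ) + 1))).hasSum
  rw [(hs n).tsum_sub ((hs (n + 1)).mul_left _), tsum_mul_left] at hsub
  have hshift := (hasSum_nat_add_iff' 1).2 hsub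
  have hcoeff : ∀ k : ℕ, w ^ (k + 1) / (((k + 1)! : ℂ) * ((k + 1 + n)! : ℂ))
      - (n + 1) * (w ^ (k + 1) / (((k + 1)! : ℂ) * ((k + 1 + (n + 1))! : ℂ)))
      = w * (w ^ k / ((k ! : ℂ) * ((k + (n + 2))! : ℂ))) := fun k => by
    rw [show k + 1 + (n + 1) = k + n + 1 + 1 by ring, show k + (n + 2) = k + n + 1 + 1 by ring,
      show k + 1 + n = k + n + 1 by ring, Nat.factorial_succ (k + n + 1), Nat.factorial_succ k]
    have hk : (k : ℂ) + 1 ≠ 0 := by exact_mod_cast k.succ_ne_zero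
    have hkn : (k : ℂ) + n + 1 + 1 ≠ 0 := by exact_mod_cast (k + n + 1).succ_ne_zero
    push_cast
    field_simp
    ring
  have hconst : (1 : ℂ) / (n ! : ℂ) - (n + 1) * (1 / ((n + 1)! : ℂ)) = 0 := by
    rw [Nat.factorial_succ]
    push_cast
    field_simp
    ring
  simp only [hcoeff, Finset.range_one, Finset.sum_singleton, pow_zero, Nat.factorial_zero,
    Nat.cast_one, one_mul, zero_add, hconst, sub_zero] at hshift
  rw [besselF, besselF, besselF, ← tsum_mul_left, hshift.tsum_eq]
  ring

theorem besselJ_eq_mul_besselF (n : ℕ) (z : ℂ) :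
    besselJ n z = (z / 2) ^ n * besselF n (-(z / 2) ^ 2) := by
  rw [besselJ, besselF, ← tsum_mul_left]
  congr 1
  funext m
  rw [neg_pow (_ ^ 2), ← pow_mul, pow_add]
  ring

theorem differentiable_besselF (n : ℕ) : Differentiable ℂ (besselF n) :=
  fun w => (hasDerivAt_besselF n w).differentiableAt

theorem differentiable_besselJ (n : ℕ) : Differentiable ℂ (besselJ n) := by
  have hF := differentiable_besselF n
  rw [funext (besselJ_eq_mul_besselF n)]
  fun_prop

theorem mul_besselJ_add_besselJ_add_two (n : ℕ) (z : ℂ) :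
    z * (besselJ n z + besselJ (n + 1 + 1) z) = 2 * (n + 1) * besselJ (n + 1) z := by
  simp only [besselJ_eq_mul_besselF]
  rw [besselF_eq_mul_add_mul n]
  ring

theorem hasDerivAt_besselJ (n : ℕ) {z : ℂ} (hz : z ≠ 0) :
    HasDerivAt (besselJ n) (n / z * besselJ n z - besselJ (n + 1) z) z := by
  have hpow : HasDerivAt (fun y : ℂ => (y / 2) ^ n) (n / z * (z / 2) ^ n) z := by
    refine (((hasDerivAt_id' z).div_const 2).fun_pow n).congr_deriv ?_
    cases n with
    | zero => simp
    | succ k =>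
      rw [Nat.add_sub_cancel]
      field_simp
      ring
  have hq : HasDerivAt (fun y : ℂ => -(y / 2) ^ 2) (-(z / 2)) z := by
    refine (((hasDerivAt_id' z).div_const 2).fun_pow 2).neg.congr_deriv ?_
    ring
  rw [funext (besselJ_eq_mul_besselF n)]
  refine (hpow.fun_mul ((hasDerivAt_besselF n _).comp z hq)).congr_deriv ?_
  rw [besselJ_eq_mul_besselF, Function.comp_apply]
  ring

theorem hasDerivAt_deriv_besselJ (n : ℕ) {z : ℂ} (hz : z ≠ 0) :
    HasDerivAt (deriv (besselJ n))
      ((n ^ 2 - n) / z ^ 2 * besselJ n z - besselJ n z + besselJ (n + 1) z / z) z := by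
  have hev : deriv (besselJ n) =ᶠ[𝓝 z] fun y => n / y * besselJ n y - besselJ (n + 1) y :=
    (eventually_ne_nhds hz).mono fun y hy => (hasDerivAt_besselJ n hy).deriv
  have hder := ((hasDerivAt_inv hz).const_mul (n : ℂ)).fun_mul (hasDerivAt_besselJ n hz)
    |>.fun_sub (hasDerivAt_besselJ (n + 1) hz)
  refine (hder.congr_of_eventuallyEq (by simpa [div_eq_mul_inv] using hev)).congr_deriv ?_
  have hrec := mul_besselJ_add_besselJ_add_two n z
  field_simp
  push_cast
  linear_combination z * hrec

theorem besselJ_ode (n : ℕ) {z : ℂ} (hz : z ≠ 0) :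
    z ^ 2 * deriv (deriv (besselJ n)) z + z * deriv (besselJ n) z
      + (z ^ 2 - n ^ 2) * besselJ n z = 0 := by
  rw [(hasDerivAt_deriv_besselJ n hz).deriv, (hasDerivAt_besselJ n hz).deriv]
  field_simp
  ring

theorem exists_mem_Icc_besselJ_mul_ne_zero (n : ℕ) {lam : ℂ} (hlam : lam ≠ 0) :
    ∃ r ∈ Set.Icc (0 : ℝ) 1, besselJ n (lam * r) ≠ 0 := by
  have hcont : ContinuousAt (fun r : ℝ => besselF n (-(lam * r / 2) ^ 2)) 0 :=
    (differentiable_besselF n).continuous.continuousAt.comp (by fun_prop)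
  have hF0 : besselF n (-(lam * ((0 : ℝ) : ℂ) / 2) ^ 2) ≠ 0 := by
    simp [besselF_zero, Nat.factorial_ne_zero]
  obtain ⟨r, hF, hr⟩ := ((hcont.eventually_ne hF0).filter_mono nhdsWithin_le_nhds).and
    (Ioo_mem_nhdsGT one_pos) |>.exists
  refine ⟨r, Set.Ioo_subset_Icc_self hr, ?_⟩
  rw [besselJ_eq_mul_besselF]
  exact mul_ne_zero (pow_ne_zero _ (by simp [hlam, hr.1.ne'])) hF

theorem HasDerivAt.comp_const_mul_ofReal {f : ℂ → ℂ} {f' c : ℂ} {x : ℝ}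
    (hf : HasDerivAt f f' (c * x)) : HasDerivAt (fun s : ℝ => f (c * s)) (c * f') x := by
  simpa [mul_comm] using (hf.comp (x : ℂ) ((hasDerivAt_id' _).const_mul c)).comp_ofReal

theorem deriv_diskMode_radial (n : ℕ) (lam : ℂ) (θ : ℝ) :
    deriv (fun s : ℝ => diskMode n lam s θ)
      = fun s : ℝ => lam * deriv (besselJ n) (lam * s) * exp (I * n * θ) :=
  funext fun _ => ((differentiable_besselJ n _).hasDerivAt.comp_const_mul_ofReal.mul_const _).deriv

theorem deriv_deriv_diskMode_radial (n : ℕ) {lam : ℂ} {r : ℝ} (hr : lam * r ≠ 0)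
    (θ : ℝ) :
    deriv (deriv fun s : ℝ => diskMode n lam s θ) r
      = lam ^ 2 * deriv (deriv (besselJ n)) (lam * r) * exp (I * n * θ) := by
  rw [deriv_diskMode_radial, (((hasDerivAt_deriv_besselJ n hr).differentiableAt.hasDerivAt
    |>.comp_const_mul_ofReal.const_mul lam).mul_const _).deriv]
  ring

theorem deriv_deriv_diskMode_angular (n : ℕ) (lam : ℂ) (r θ : ℝ) :
    deriv (deriv fun t : ℝ => diskMode n lam r t) θ = -(n : ℂ) ^ 2 * diskMode n lam r θ := by
  have hexp : ∀ t : ℝ,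
      HasDerivAt (fun t : ℝ => exp (I * n * t)) (I * n * exp (I * n * t)) t :=
    fun t => (hasDerivAt_exp _).comp_const_mul_ofReal
  rw [show deriv (fun t : ℝ => diskMode n lam r t) = fun t : ℝ => besselJ n (lam * r) *
      (I * n * exp (I * n * t)) from funext fun t => ((hexp t).const_mul _).deriv,
    (((hexp θ).const_mul _).const_mul _).deriv, diskMode]
  linear_combination ((n : ℂ) ^ 2 * besselJ n (lam * r) * exp (I * n * θ)) * I_sq

/-- If `λ ≠ 0` satisfies `(n² + iλ − λ²)J_n(λ) + λJ_n′(λ) = 0`, then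
`u(r,θ) = J_n(λr)e^{inθ}` is nonzero, satisfies `−Δu = λ²u` in the open unit disk
(with `Δ = ∂²_r + r⁻¹∂_r + r⁻²∂²_θ` in polar coordinates), and
`(−Δ_Γ + iλ)u + ∂_ν u = λ²u` on the unit circle, where `Δ_Γ = ∂²_θ` and `∂_ν = ∂_r`. -/
theorem stmt7 (n : ℕ) (lam : ℂ) (hlam : lam ≠ 0)
    (hroot : ((n : ℂ) ^ 2 + I * lam - lam ^ 2) * besselJ n lam
        + lam * deriv (besselJ n) lam = 0) :
    (∃ r ∈ Set.Icc (0 : ℝ) 1, ∃ θ : ℝ, diskMode n lam r θ ≠ 0)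
    ∧ (∀ r ∈ Set.Ioo (0 : ℝ) 1, ∀ θ : ℝ,
        -(deriv (deriv fun s : ℝ => diskMode n lam s θ) r
            + (r : ℂ)⁻¹ * deriv (fun s : ℝ => diskMode n lam s θ) r
            + ((r : ℂ) ^ 2)⁻¹ * deriv (deriv fun t : ℝ => diskMode n lam r t) θ)
          = lam ^ 2 * diskMode n lam r θ)
    ∧ (∀ θ : ℝ,
        -(deriv (deriv fun t : ℝ => diskMode n lam 1 t) θ)
            + I * lam * diskMode n lam 1 θ
            + deriv (fun s : ℝ => diskMode n lam s θ) 1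
          = lam ^ 2 * diskMode n lam 1 θ) := by
  refine ⟨?_, fun r hr θ => ?_, fun θ => ?_⟩
  · obtain ⟨r, hr, hJ⟩ := exists_mem_Icc_besselJ_mul_ne_zero n hlam
    exact ⟨r, hr, 0, mul_ne_zero hJ (exp_ne_zero _)⟩
  · have hr0 : (r : ℂ) ≠ 0 := ofReal_ne_zero.2 hr.1.ne'
    have hz : lam * r ≠ 0 := mul_ne_zero hlam hr0
    rw [deriv_deriv_diskMode_radial n hz, deriv_diskMode_radial, deriv_deriv_diskMode_angular,
      diskMode]
    field_simp
    linear_combination -besselJ_ode n hz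
  · rw [deriv_deriv_diskMode_angular, deriv_diskMode_radial, diskMode]
    simp only [ofReal_one, mul_one]
    linear_combination exp (I * n * θ) * hroot
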